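/- Let p be a prime, q > 1 a power of p, k ≥ 2 and m ≥ 1 integers. Then for every integer i with 0 ≤ i ≤ k−2 and every integer j with 0 ≤ j ≤ k+p^m−2: if 0 ≤ j ≤ k−2 then U^{(k+p^m)}_{i,j} ≡ U^{(k)}_{i,j} (mod t^{p^m}) in 𝔽_q[t], and if j ≥ k−1 then U^{(k+p^m)}_{i,j} ≡ 0 (mod t^{p^m}). (This is the assertion on the top k−1 rows in the block congruence U^{(k+p^m)} ≡ [[U^{(k)}, O, O], [C, t^{k−1}D, O]] mod t^{p^m} for suitable glissando matrices C and D.) -/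

import Mathlib

open Polynomial

noncomputable section DrinfeldGM

/-- Integer-argument binomial coefficient `C(c,d)`, equal to `0` whenever any of
`c`, `d`, `c - d` is negative. -/
def intChoose (c d : ℤ) : ℤ :=
  if 0 ≤ c ∧ 0 ≤ d ∧ d ≤ c then (Nat.choose c.toNat d.toNat : ℤ) else 0

/-- The `(i,j)` entry of the matrix of the `U`-operator on `S_k(Γ₁(t))` in the
Bandini–Valentino basis (here `t` is the polynomial variable `X`).  For `i = j` it is
`(-t)^j C(k-2-j, j)`; for `i = j + h(q-1)` with `h ≠ 0` (equivalently `(q-1) ∣ i - j`,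
`i ≠ j`, in which case `h(q-1) = i - j`) it is
`-t^j (C(k-2-i, j-i) + (-1)^{j+1} C(k-2-i, j))`; and it is `0` otherwise. -/
def Uent (F : Type*) [Field F] (q k : ℕ) (i j : ℕ) : Polynomial F :=
  if i = j then
    (-Polynomial.X : Polynomial F) ^ j * ((intChoose ((k : ℤ) - 2 - (j : ℤ)) (j : ℤ) : ℤ) : Polynomial F)
  else if ((q : ℤ) - 1) ∣ ((i : ℤ) - (j : ℤ)) then
    -((Polynomial.X : Polynomial F) ^ j *
      ((intChoose ((k : ℤ) - 2 - (i : ℤ)) ((j : ℤ) - (i : ℤ)) +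
        (-1) ^ (j + 1) * intChoose ((k : ℤ) - 2 - (i : ℤ)) (j : ℤ) : ℤ) : Polynomial F))
  else 0

/-- The representing matrix `U^{(k)} ∈ M_{k-1}(𝔽_q[t])` of the `U`-operator on
`S_k(Γ₁(t))`, rows and columns indexed by `0, …, k-2`. -/
def Umat (F : Type*) [Field F] (q k : ℕ) :
    Matrix (Fin (k - 1)) (Fin (k - 1)) (Polynomial F) :=
  Matrix.of fun i j => Uent F q k (i : ℕ) (j : ℕ)

/-- A matrix over `𝔽_q[[t]]` is *glissando* if every entry of its `j`-th column is an
`𝔽_q`-multiple of `t^j`. -/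
def Glissando {F : Type*} [Field F] {m n : ℕ}
    (B : Matrix (Fin m) (Fin n) (PowerSeries F)) : Prop :=
  ∀ i j, ∃ c : F, B i j = (PowerSeries.C c : PowerSeries F) * (PowerSeries.X : PowerSeries F) ^ (j : ℕ)

/-- The inclusion `𝔽_q[t] → 𝔽_q[[t]]`. -/
def polyToPS (F : Type*) [Field F] : Polynomial F →+* PowerSeries F :=
  Polynomial.coeToPowerSeries.ringHom

/-- The inclusion of `𝔽_q[[t]]` into a fixed algebraic closure `K̄` of `K = 𝔽_q((t))`. -/
def psToKbar (F : Type*) [Field F] :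
    PowerSeries F →+* AlgebraicClosure (LaurentSeries F) :=
  (algebraMap (LaurentSeries F) (AlgebraicClosure (LaurentSeries F))).comp
    (algebraMap (PowerSeries F) (LaurentSeries F))

/-- The inclusion `𝔽_q[t] → K̄`. -/
def polyToKbar (F : Type*) [Field F] :
    Polynomial F →+* AlgebraicClosure (LaurentSeries F) :=
  (psToKbar F).comp (polyToPS F)

/-- The element `t` of `K̄`. -/
def tbar (F : Type*) [Field F] : AlgebraicClosure (LaurentSeries F) :=
  psToKbar F PowerSeries.X

/-- Integrality over `𝔽_q[[t]]` of an element of `K̄`. -/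
def IntegralPS (F : Type*) [Field F] (x : AlgebraicClosure (LaurentSeries F)) : Prop :=
  letI : Algebra (PowerSeries F) (AlgebraicClosure (LaurentSeries F)) := (psToKbar F).toAlgebra
  IsIntegral (PowerSeries F) x

/-- `HasVal F λ α` says that `λ ∈ K̄` is nonzero and has valuation `α` for the unique
extension `v` to `K̄` of the `t`-adic valuation with `v(t) = 1`: writing `α = a/b` with
`b > 0`, this means that both `λ^b/t^a` and `t^a/λ^b` are integral over `𝔽_q[[t]]`. -/
def HasVal (F : Type*) [Field F] (lam : AlgebraicClosure (LaurentSeries F)) (α : ℚ) : Prop :=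
  lam ≠ 0 ∧ ∃ a b : ℤ, 0 < b ∧ α = (a : ℚ) / (b : ℚ) ∧
    IntegralPS F (lam ^ b / tbar F ^ a) ∧ IntegralPS F (tbar F ^ a / lam ^ b)

/-- `d(k, α)`: the number of roots `λ` of `det(X·I - U^{(k)})` in `K̄` with `v(λ) = α`,
counted with multiplicity.  This is the dimension of the slope-`α` generalized eigenspace
of the `U`-operator on `S_k(Γ₁(t))`. -/
def dDim (F : Type*) [Field F] (q k : ℕ) (α : ℚ) : ℕ :=
  letI := Classical.decPred fun lam : AlgebraicClosure (LaurentSeries F) => HasVal F lam α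
  Multiset.card <| Multiset.filter (fun lam => HasVal F lam α) <|
    (((Umat F q k).charpoly).map (polyToKbar F)).roots

/-- `det(I - t^l X B)` for a square matrix `B` over `𝔽_q[[t]]`, as a polynomial in `X`
over `𝔽_q[[t]]`. -/
def charSeriesTw (F : Type*) [Field F] {m : ℕ} (l : ℕ)
    (B : Matrix (Fin m) (Fin m) (PowerSeries F)) : Polynomial (PowerSeries F) :=
  Matrix.det (1 - (Polynomial.C ((PowerSeries.X : PowerSeries F) ^ l) * Polynomial.X) •
    B.map Polynomial.C)

/-- `det(I - X B)` for a square matrix `B` over `𝔽_q[[t]]`. -/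
def charSeriesPS (F : Type*) [Field F] {m : ℕ}
    (B : Matrix (Fin m) (Fin m) (PowerSeries F)) : Polynomial (PowerSeries F) :=
  Matrix.det (1 - (Polynomial.X : Polynomial (PowerSeries F)) • B.map Polynomial.C)

/-- `P^{(k)}(X) = det(I - X·U^{(k)}) ∈ 𝔽_q[t][X]`. -/
def Pser (F : Type*) [Field F] (q k : ℕ) : Polynomial (Polynomial F) :=
  Matrix.det (1 - (Polynomial.X : Polynomial (Polynomial F)) • (Umat F q k).map Polynomial.C)

/- Column `j` of `U^{(k)}` is divisible by `t^j`, so only the columns `j < p^m` matter.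
There the entries of `U^{(k+p^m)}` and `U^{(k)}` are given by the same formula with the upper
binomial argument shifted by `p^m`, and `(1 + X)^(n + p^m) = (1 + X)^n (1 + X^(p^m))` in
characteristic `p` gives `C(n + p^m, d) ≡ C(n, d) (mod p)` for `d < p^m`.  Finally, in the top
rows the entries of `U^{(k)}` in the columns `j ≥ k - 1` vanish, since both binomial coefficients
have lower argument exceeding the upper one. -/

lemma Nat.cast_choose_add_char_pow (R : Type*) [CommRing R] (p : ℕ) [Fact p.Prime] [CharP R p]
    {m d : ℕ} (n : ℕ) (hd : d < p ^ m) :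
    (((n + p ^ m).choose d : ℕ) : R) = ((n.choose d : ℕ) : R) := by
  have h : ((X + 1 : R[X]) ^ (n + p ^ m)).coeff d = ((X + 1 : R[X]) ^ n).coeff d := by
    rw [pow_add, add_pow_char_pow, one_pow, mul_add, mul_one, coeff_add, coeff_mul_X_pow',
      if_neg (Nat.not_le.mpr hd), zero_add]
  simpa only [coeff_X_add_one_pow] using h

lemma intChoose_eq_zero_of_lt {c d : ℤ} (h : c < d) : intChoose c d = 0 :=
  if_neg fun ⟨_, _, hdc⟩ => (hdc.trans_lt h).false

lemma Int.cast_intChoose_add_char_pow (R : Type*) [CommRing R] (p : ℕ) [Fact p.Prime] [CharP R p]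
    {m : ℕ} {c d : ℤ} (hc : 0 ≤ c) (hd : d < (p : ℤ) ^ m) :
    ((intChoose (c + (p : ℤ) ^ m) d : ℤ) : R) = ((intChoose c d : ℤ) : R) := by
  rcases lt_or_ge d 0 with hd0 | hd0
  · simp only [intChoose, hd0.not_ge, false_and, and_false, if_false]
  lift c to ℕ using hc
  lift d to ℕ using hd0
  have hchoose (n : ℕ) : ((intChoose n d : ℤ) : R) = ((n.choose d : ℕ) : R) := by
    rcases le_or_gt d n with hdn | hnd
    · simp [intChoose, hdn]
    · rw [intChoose_eq_zero_of_lt (by exact_mod_cast hnd), Nat.choose_eq_zero_of_lt hnd]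
      simp
  rw [← Nat.cast_pow, ← Nat.cast_add, hchoose, hchoose,
    Nat.cast_choose_add_char_pow R p c (by exact_mod_cast hd)]

section Uent

variable {F : Type*} [Field F] {q k i j : ℕ}

lemma X_pow_dvd_Uent : (X : F[X]) ^ j ∣ Uent F q k i j := by
  unfold Uent
  split_ifs
  · exact (pow_dvd_pow_of_dvd (dvd_neg.mpr dvd_rfl) j).mul_right _
  · exact dvd_neg.mpr (dvd_mul_right _ _)
  · exact dvd_zero _

lemma Uent_eq_zero_of_lt (hij : i < j) (hjk : k < j + 2) : Uent F q k i j = 0 := by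
  unfold Uent
  rw [if_neg hij.ne]
  split_ifs
  · rw [intChoose_eq_zero_of_lt (by omega), intChoose_eq_zero_of_lt (by omega)]
    simp
  · rfl

lemma Uent_add_char_pow (p : ℕ) [Fact p.Prime] [CharP F p] {m : ℕ} (hi : i + 2 ≤ k)
    (hj : j < p ^ m) : Uent F q (k + p ^ m) i j = Uent F q k i j := by
  have hshift {d : ℤ} (hd : d < (p : ℤ) ^ m) :
      ((intChoose ((k : ℤ) + (p : ℤ) ^ m - 2 - i) d : ℤ) : F[X]) =
        intChoose ((k : ℤ) - 2 - i) d := by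
    rw [show (k : ℤ) + (p : ℤ) ^ m - 2 - i = ((k : ℤ) - 2 - i) + (p : ℤ) ^ m by ring]
    exact Int.cast_intChoose_add_char_pow _ p (by omega) hd
  have hj' : (j : ℤ) < (p : ℤ) ^ m := by exact_mod_cast hj
  unfold Uent
  push_cast
  split_ifs with hij
  · subst hij
    rw [hshift hj']
  · rw [hshift hj', hshift (by omega)]
  · rfl

lemma X_pow_dvd_Uent_add_char_pow_sub (p : ℕ) [Fact p.Prime] [CharP F p] {m : ℕ}
    (hi : i + 2 ≤ k) : (X : F[X]) ^ (p ^ m) ∣ Uent F q (k + p ^ m) i j - Uent F q k i j := by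
  rcases le_or_gt (p ^ m) j with hj | hj
  · exact dvd_sub ((pow_dvd_pow X hj).trans X_pow_dvd_Uent)
      ((pow_dvd_pow X hj).trans X_pow_dvd_Uent)
  · rw [Uent_add_char_pow p hi hj, sub_self]
    exact dvd_zero _

end Uent

theorem Umat_top_rows_mod_t_pow_general
    (p q : ℕ) (hp : p.Prime) (hq : ∃ e : ℕ, 1 ≤ e ∧ q = p ^ e)
    (F : Type) [Field F] [Fintype F] (hF : Fintype.card F = q)
    (k m : ℕ) (hk : 2 ≤ k)
    (i j : Fin (k + p ^ m - 1)) (hi : (i : ℕ) ≤ k - 2) :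
    (∀ j' : Fin (k - 1), (j : ℕ) = (j' : ℕ) → ∀ i' : Fin (k - 1), (i : ℕ) = (i' : ℕ) →
      (Polynomial.X : Polynomial F) ^ (p ^ m) ∣
        (Umat F q (k + p ^ m) i j - Umat F q k i' j')) ∧
    (k - 1 ≤ (j : ℕ) →
      (Polynomial.X : Polynomial F) ^ (p ^ m) ∣ Umat F q (k + p ^ m) i j) := by
  have : Fact p.Prime := ⟨hp⟩
  obtain ⟨e, -, hqe⟩ := hq
  have : CharP F p := charP_of_card_eq_prime_pow (hF.trans hqe)
  have hik : (i : ℕ) + 2 ≤ k := by omega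
  refine ⟨fun j' hj i' hi' => ?_, fun hkj => ?_⟩
  · simpa only [Umat, Matrix.of_apply, ← hj, ← hi'] using
      X_pow_dvd_Uent_add_char_pow_sub (q := q) (j := j) p hik
  · have hzero : Uent F q k i j = 0 := Uent_eq_zero_of_lt (by omega) (by omega)
    simpa only [Umat, Matrix.of_apply, hzero, sub_zero] using
      X_pow_dvd_Uent_add_char_pow_sub (F := F) (q := q) (j := j) p hik

/-- The top `k-1` rows of the block congruence
`U^{(k+p^m)} ≡ [[U^{(k)}, O, O], [C, t^{k-1}D, O]] (mod t^{p^m})`: for every row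
`i ≤ k-2` and column `j ≤ k+p^m-2`, if `j ≤ k-2` then
`U^{(k+p^m)}_{i,j} ≡ U^{(k)}_{i,j} (mod t^{p^m})`, and if `j ≥ k-1` then
`U^{(k+p^m)}_{i,j} ≡ 0 (mod t^{p^m})`. -/
theorem Umat_top_rows_mod_t_pow
    (p q : ℕ) (hp : p.Prime) (hq : ∃ e : ℕ, 1 ≤ e ∧ q = p ^ e)
    (F : Type) [Field F] [Fintype F] (hF : Fintype.card F = q)
    (k m : ℕ) (hk : 2 ≤ k) (hm : 1 ≤ m)
    (i j : Fin (k + p ^ m - 1)) (hi : (i : ℕ) ≤ k - 2) :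
    (∀ j' : Fin (k - 1), (j : ℕ) = (j' : ℕ) → ∀ i' : Fin (k - 1), (i : ℕ) = (i' : ℕ) →
      (Polynomial.X : Polynomial F) ^ (p ^ m) ∣
        (Umat F q (k + p ^ m) i j - Umat F q k i' j')) ∧
    (k - 1 ≤ (j : ℕ) →
      (Polynomial.X : Polynomial F) ^ (p ^ m) ∣ Umat F q (k + p ^ m) i j) :=
  Umat_top_rows_mod_t_pow_general p q hp hq F hF k m hk i j hi

end DrinfeldGM
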